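/- arXiv:2207.13892 — 3 statements merged into one kernel-verified Lean document; each statement's English description precedes it below -/
import Mathlib

section
/- Let d ≥ 1, let α > 0, and let k ≥ 2. Suppose there exist k points v_1, …, v_k ∈ S^d that are pairwise at geodesic distance exactly α (a k-clique in the exact distance graph D⁰(α)). Then for every ε with 0 < ε < α and every finite (ε/4)-net X of S^d, the chromatic number of the ε-distance graph D_{X,ε}(α) is at least k+1. -/
open scoped RealInnerProductSpace

/-- Geodesic distance `arccos ⟨x, y⟩` on the unit sphere in `ℝ^n`. -/
noncomputable def gd {n : ℕ} (x y : EuclideanSpace ℝ (Fin n)) : ℝ :=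
  Real.arccos (inner ℝ x y : ℝ)

lemma gd_comm {n : ℕ} (x y : EuclideanSpace ℝ (Fin n)) : gd x y = gd y x := by
  rw [gd, gd, real_inner_comm]

/-- The unit sphere `S^d ⊆ ℝ^{d+1}`. -/
noncomputable def unitSphere (d : ℕ) : Set (EuclideanSpace ℝ (Fin (d + 1))) :=
  Metric.sphere 0 1

/-- `X` is an `r`-net of `S^d`: every point of the sphere is within geodesic
distance `r` of a point of `X`. -/
def IsNet (d : ℕ) (r : ℝ) (X : Set (EuclideanSpace ℝ (Fin (d + 1)))) : Prop :=
  ∀ y ∈ unitSphere d, ∃ x ∈ X, gd x y ≤ r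

/-- The ε-distance graph with parameter α on a set `X ⊆ ℝ^n`: distinct points are
adjacent iff their geodesic distance lies in `[α - ε, α + ε]`. -/
noncomputable def distGraph {n : ℕ} (X : Set (EuclideanSpace ℝ (Fin n))) (α ε : ℝ) :
    SimpleGraph X where
  Adj x y := x ≠ y ∧ α - ε ≤ gd x.1 y.1 ∧ gd x.1 y.1 ≤ α + ε
  symm := ⟨by
    intro x y h
    exact ⟨h.1.symm, by rw [gd_comm]; exact h.2.1, by rw [gd_comm]; exact h.2.2⟩⟩
  loopless := ⟨fun x h => h.1 rfl⟩

/-!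
Suppose `c` properly colours `D_{X,ε}(α)` with `k` colours, and give each point `y` of the sphere
the colours of the net points within `ε / 4` of it. Two points at distance within `ε / 2` of `α`
never share a colour, since their net points are then adjacent. Rotating the clique so that one
vertex sits at `y`, its `k` vertices carry `k` distinct colours, so every colour occurs at a vertex
at distance `α` from `y`; a point `y'` within `ε / 2` of `y` is within `ε / 2` of `α` from all
vertices but the one at `y`, so it can only have the colour of `y`. The colouring of the sphere is
therefore locally constant, hence constant as `S^d` is connected for `d ≥ 1`, which contradicts
the two distinct colours at two vertices of the clique.
-/

open InnerProductGeometry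

section Geodesic

variable {n : ℕ} {x y z : EuclideanSpace ℝ (Fin n)}

lemma norm_eq_one_of_mem_unitSphere {d : ℕ} {x : EuclideanSpace ℝ (Fin (d + 1))}
    (hx : x ∈ unitSphere d) : ‖x‖ = 1 :=
  mem_sphere_zero_iff_norm.mp hx

lemma isPreconnected_unitSphere {d : ℕ} (hd : 1 ≤ d) : IsPreconnected (unitSphere d) := by
  refine (isConnected_sphere ?_ 0 zero_le_one).isPreconnected
  rw [← Module.finrank_eq_rank, finrank_euclideanSpace_fin]
  exact_mod_cast (by omega : 1 < d + 1)

lemma gd_eq_angle (hx : ‖x‖ = 1) (hy : ‖y‖ = 1) : gd x y = angle x y := by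
  simp [gd, angle, hx, hy]

lemma gd_triangle (hx : ‖x‖ = 1) (hy : ‖y‖ = 1) (hz : ‖z‖ = 1) :
    gd x z ≤ gd x y + gd y z := by
  rw [gd_eq_angle hx hz, gd_eq_angle hx hy, gd_eq_angle hy hz]
  exact angle_le_angle_add_angle x y z

lemma gd_self (hx : ‖x‖ = 1) : gd x x = 0 := by
  rw [gd_eq_angle hx hx, angle_self (norm_ne_zero_iff.mp (by rw [hx]; exact one_ne_zero))]

lemma gd_map (g : EuclideanSpace ℝ (Fin n) ≃ₗᵢ[ℝ] EuclideanSpace ℝ (Fin n)) :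
    gd (g x) (g y) = gd x y := by
  rw [gd, gd, LinearIsometryEquiv.inner_map_map]

lemma continuous_gd (x : EuclideanSpace ℝ (Fin n)) : Continuous (gd x) :=
  Real.continuous_arccos.comp (continuous_const.inner continuous_id)

end Geodesic

lemma exists_linearIsometryEquiv_apply_eq {E : Type*} [NormedAddCommGroup E]
    [InnerProductSpace ℝ E] {x y : E} (h : ‖x‖ = ‖y‖) : ∃ g : E ≃ₗᵢ[ℝ] E, g x = y :=
  ⟨_, Submodule.reflection_sub h⟩

section NetColoring

variable {d : ℕ} {α ε : ℝ} {X : Set (EuclideanSpace ℝ (Fin (d + 1)))}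

/-- The colouring `c` of the net spread to the whole sphere; a point may receive several colours
a priori. -/
def NearColor {β : Type*} (c : (distGraph X α ε).Coloring β) (y : EuclideanSpace ℝ (Fin (d + 1)))
    (i : β) : Prop :=
  ∃ x : X, gd x.1 y ≤ ε / 4 ∧ c x = i

variable {y z : EuclideanSpace ℝ (Fin (d + 1))}

lemma NearColor.not_nearColor {β : Type*} {c : (distGraph X α ε).Coloring β} {i : β}
    (hXS : X ⊆ unitSphere d) (hεα : ε < α) (hy : y ∈ unitSphere d) (hz : z ∈ unitSphere d)
    (hyz : |gd y z - α| ≤ ε / 2) (hyi : NearColor c y i) : ¬ NearColor c z i := by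
  rintro ⟨x', hx'z, rfl⟩
  obtain ⟨x, hxy, hxx'⟩ := hyi
  have hx := norm_eq_one_of_mem_unitSphere (hXS x.2)
  have hx' := norm_eq_one_of_mem_unitSphere (hXS x'.2)
  have hy := norm_eq_one_of_mem_unitSphere hy
  have hz := norm_eq_one_of_mem_unitSphere hz
  have := gd_triangle hx hy hx'
  have := gd_triangle hy hz hx'
  have := gd_triangle hy hx hz
  have := gd_triangle hx hx' hz
  rw [gd_comm y x] at *
  rw [gd_comm z x'] at *
  obtain ⟨hyz₁, hyz₂⟩ := abs_le.mp hyz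
  have hne : x ≠ x' := by
    rintro rfl
    rw [gd_self hx] at *
    linarith
  exact c.valid ⟨hne, by linarith, by linarith⟩ hxx'

lemma IsNet.exists_nearColor {β : Type*} (hnet : IsNet d (ε / 4) X)
    (c : (distGraph X α ε).Coloring β) (hy : y ∈ unitSphere d) : ∃ i, NearColor c y i :=
  let ⟨x, hxX, hxy⟩ := hnet y hy
  ⟨c ⟨x, hxX⟩, ⟨x, hxX⟩, hxy, rfl⟩

lemma injective_of_nearColor_clique {ι β : Type*} {c : (distGraph X α ε).Coloring β}
    (hXS : X ⊆ unitSphere d) (hε : 0 ≤ ε) (hεα : ε < α)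
    {w : ι → EuclideanSpace ℝ (Fin (d + 1))} (hwS : ∀ j, w j ∈ unitSphere d)
    (hwα : ∀ j j', j ≠ j' → gd (w j) (w j') = α) {q : ι → β}
    (hq : ∀ j, NearColor c (w j) (q j)) : Function.Injective q := by
  intro j j' hqj
  by_contra hjj'
  refine (hq j).not_nearColor hXS hεα (hwS j) (hwS j') ?_ (hqj ▸ hq j')
  rw [hwα j j' hjj', sub_self, abs_zero]
  positivity

variable {k : ℕ} {c : (distGraph X α ε).Coloring (Fin k)} {v : Fin k → EuclideanSpace ℝ (Fin (d + 1))}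

lemma NearColor.eq_of_gd_le (hXS : X ⊆ unitSphere d) (hε : 0 ≤ ε) (hεα : ε < α)
    (hnet : IsNet d (ε / 4) X) (hvS : ∀ j, v j ∈ unitSphere d)
    (hclique : ∀ j j', j ≠ j' → gd (v j) (v j') = α) (hy : y ∈ unitSphere d)
    (hz : z ∈ unitSphere d) (hyz : gd y z ≤ ε / 2) {i i' : Fin k} (hi : NearColor c y i)
    (hi' : NearColor c z i') : i = i' := by
  have hy₁ := norm_eq_one_of_mem_unitSphere hy
  obtain ⟨g, hg⟩ := exists_linearIsometryEquiv_apply_eq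
    ((norm_eq_one_of_mem_unitSphere (hvS i)).trans hy₁.symm)
  set w : Fin k → EuclideanSpace ℝ (Fin (d + 1)) := fun j => g (v j)
  have hwS : ∀ j, w j ∈ unitSphere d := fun j => by
    simpa [w, unitSphere] using hvS j
  have hwα : ∀ j j', j ≠ j' → gd (w j) (w j') = α := fun j j' h =>
    (gd_map g).trans (hclique j j' h)
  choose q hq using fun j => hnet.exists_nearColor c (hwS j)
  -- recolouring the vertex `w i = y` by `i` keeps a valid choice, which by pigeonhole is onto
  have hq' : ∀ j, NearColor c (w j) (Function.update q i i j) := by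
    intro j
    rcases eq_or_ne j i with rfl | hj
    · simpa [w, hg] using hi
    · simpa [hj] using hq j
  obtain ⟨j, hj⟩ := (Finite.injective_iff_surjective.mp
    (injective_of_nearColor_clique hXS hε hεα hwS hwα hq')) i'
  rcases eq_or_ne j i with rfl | hji
  · simpa using hj
  · have hz₁ := norm_eq_one_of_mem_unitSphere hz
    have hwj := norm_eq_one_of_mem_unitSphere (hwS j)
    have hyw : gd y (w j) = α := by rw [← hg]; exact hwα i j hji.symm
    have := gd_triangle hz₁ hy₁ hwj
    have := gd_triangle hy₁ hz₁ hwj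
    rw [gd_comm z y] at *
    refine absurd (hj ▸ hi') ((hq' j).not_nearColor hXS hεα (hwS j) hz ?_)
    rw [gd_comm, abs_le]
    constructor <;> linarith

lemma isLocallyConstant_of_nearColor (hXS : X ⊆ unitSphere d) (hε : 0 < ε) (hεα : ε < α)
    (hnet : IsNet d (ε / 4) X) (hvS : ∀ j, v j ∈ unitSphere d)
    (hclique : ∀ j j', j ≠ j' → gd (v j) (v j') = α) {f : unitSphere d → Fin k}
    (hf : ∀ y, NearColor c y.1 (f y)) : IsLocallyConstant f := by
  refine (IsLocallyConstant.iff_eventually_eq f).2 fun y => ?_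
  have hopen : IsOpen {z : unitSphere d | gd y.1 z.1 < ε / 2} :=
    isOpen_lt ((continuous_gd y.1).comp continuous_subtype_val) continuous_const
  have hy : y ∈ {z : unitSphere d | gd y.1 z.1 < ε / 2} := by
    simp [gd_self (norm_eq_one_of_mem_unitSphere y.2), hε]
  filter_upwards [hopen.mem_nhds hy] with z hz
  exact (NearColor.eq_of_gd_le hXS hε.le hεα hnet hvS hclique y.2 z.2 hz.le (hf y) (hf z)).symm

end NetColoring

theorem stmt_2_general (d k : ℕ) (hd : 1 ≤ d) (hk : 2 ≤ k) (α : ℝ)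
    (v : Fin k → EuclideanSpace ℝ (Fin (d + 1))) (hvS : ∀ i, v i ∈ unitSphere d)
    (hclique : ∀ i j, i ≠ j → gd (v i) (v j) = α)
    (ε : ℝ) (hε0 : 0 < ε) (hεα : ε < α)
    (X : Set (EuclideanSpace ℝ (Fin (d + 1)))) (hXS : X ⊆ unitSphere d)
    (hnet : IsNet d (ε / 4) X) :
    (k + 1 : ℕ) ≤ (distGraph X α ε).chromaticNumber := by
  rw [Nat.cast_add_one, ENat.add_one_le_iff (ENat.natCast_ne_top k), lt_iff_not_ge,
    SimpleGraph.chromaticNumber_le_iff_colorable]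
  rintro ⟨c⟩
  choose f hf using fun y : unitSphere d => hnet.exists_nearColor c y.2
  have := Subtype.preconnectedSpace (isPreconnected_unitSphere hd)
  have hconst := (isLocallyConstant_of_nearColor hXS hε0 hεα hnet hvS hclique
    hf).apply_eq_of_preconnectedSpace
  have hinj := injective_of_nearColor_clique hXS hε0.le hεα hvS hclique fun j => hf ⟨v j, hvS j⟩
  obtain ⟨i, j, hij⟩ : ∃ i j : Fin k, i ≠ j := ⟨⟨0, by omega⟩, ⟨1, by omega⟩, by simp⟩
  exact hij (hinj (hconst _ _))

/-- a `k`-clique in the exact distance graph `D⁰(α)` forces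
`χ(D_{X,ε}(α)) ≥ k + 1` for every finite `(ε/4)`-net `X` of `S^d`. -/
theorem stmt_2 (d k : ℕ) (hd : 1 ≤ d) (hk : 2 ≤ k) (α : ℝ) (hα : 0 < α)
    (v : Fin k → EuclideanSpace ℝ (Fin (d + 1))) (hvS : ∀ i, v i ∈ unitSphere d)
    (hclique : ∀ i j, i ≠ j → gd (v i) (v j) = α)
    (ε : ℝ) (hε0 : 0 < ε) (hεα : ε < α)
    (X : Set (EuclideanSpace ℝ (Fin (d + 1)))) (hXS : X ⊆ unitSphere d)
    (hXfin : X.Finite) (hnet : IsNet d (ε / 4) X) :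
    (k + 1 : ℕ) ≤ (distGraph X α ε).chromaticNumber :=
  stmt_2_general d k hd hk α v hvS hclique ε hε0 hεα X hXS hnet
end

section
/- Let d ≥ 1, α > 0, and k, m ∈ ℕ. Suppose S^d is partitioned into finitely many nonempty sets A_1, …, A_m, each of geodesic diameter strictly less than α, together with a coloring c : {1,…,m} → {1,…,k} and a real δ > α such that whenever j ≠ j' and c(j) = c(j'), every x ∈ A_j and y ∈ A_{j'} satisfy d(x,y) ≥ δ. Then there exists ε₀ > 0 such that for all 0 ≤ ε ≤ ε₀ and every subset X ⊆ S^d, the chromatic number of the ε-distance graph D_{X,ε}(α) is at most k. -/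
open scoped RealInnerProductSpace

/-!
Colour a point of `X` by the colour of the cell containing it. Two points of the same cell
are at distance at most the largest cell diameter `β < α`, and two points of distinct cells of
the same colour are at distance at least `δ > α`; so once `ε < min (α - β) (δ - α)`, no two
points at distance in `[α - ε, α + ε]` get the same colour.
-/

lemma Finite.exists_lt_forall_le_of_forall_lt {ι R : Type*} [Finite ι] [LinearOrder R]
    [NoMinOrder R] {B : ι → R} {a : R} (h : ∀ i, B i < a) : ∃ b < a, ∀ i, B i ≤ b := by
  cases isEmpty_or_nonempty ι with
  | inl _ =>
    obtain ⟨b, hb⟩ := exists_lt a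
    exact ⟨b, hb, isEmptyElim⟩
  | inr _ =>
    obtain ⟨i₀, hi₀⟩ := Finite.exists_max B
    exact ⟨B i₀, h i₀, hi₀⟩

lemma distGraph_colorable_of_cells {n : ℕ} {X : Set (EuclideanSpace ℝ (Fin n))}
    {ι : Type*} {k : ℕ} (A : ι → Set (EuclideanSpace ℝ (Fin n))) (c : ι → Fin k)
    {α ε β δ : ℝ} (hX : X ⊆ ⋃ i, A i)
    (hdiam : ∀ i, ∀ x ∈ A i, ∀ y ∈ A i, gd x y ≤ β) (hβ : β < α - ε)
    (hfar : ∀ i j, i ≠ j → c i = c j → ∀ x ∈ A i, ∀ y ∈ A j, δ ≤ gd x y)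
    (hδ : α + ε < δ) : (distGraph X α ε).Colorable k := by
  choose cell hcell using fun x : X => Set.mem_iUnion.mp (hX x.2)
  refine ⟨SimpleGraph.Coloring.mk (fun x => c (cell x)) ?_⟩
  rintro x y ⟨-, hlow, hhigh⟩ hcol
  by_cases hsame : cell x = cell y
  · have := hdiam (cell x) x (hcell x) y (hsame ▸ hcell y)
    linarith
  · have := hfar (cell x) (cell y) hsame hcol x (hcell x) y (hcell y)
    linarith

theorem stmt_6_general (d : ℕ) (α : ℝ) (k m : ℕ)
    (A : Fin m → Set (EuclideanSpace ℝ (Fin (d + 1))))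
    (hcover : (⋃ j, A j) = unitSphere d)
    (hdiam : ∀ j, ∃ β, β < α ∧ ∀ x ∈ A j, ∀ y ∈ A j, gd x y ≤ β)
    (c : Fin m → Fin k) (δ : ℝ) (hδ : α < δ)
    (hfar : ∀ j j', j ≠ j' → c j = c j' → ∀ x ∈ A j, ∀ y ∈ A j', δ ≤ gd x y) :
    ∃ ε₀ > (0 : ℝ), ∀ ε : ℝ, 0 ≤ ε → ε ≤ ε₀ →
      ∀ X : Set (EuclideanSpace ℝ (Fin (d + 1))), X ⊆ unitSphere d →
        (distGraph X α ε).chromaticNumber ≤ k := by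
  choose B hBα hB using hdiam
  obtain ⟨β, hβα, hBβ⟩ := Finite.exists_lt_forall_le_of_forall_lt hBα
  refine ⟨min ((α - β) / 2) ((δ - α) / 2), lt_min (by linarith) (by linarith), ?_⟩
  intro ε _ hε X hX
  have hεβ := hε.trans (min_le_left _ _)
  have hεδ := hε.trans (min_le_right _ _)
  exact SimpleGraph.Colorable.chromaticNumber_le <|
    distGraph_colorable_of_cells A c (hcover ▸ hX)
      (fun j x hx y hy => (hB j x hx y hy).trans (hBβ j)) (by linarith) hfar (by linarith)

/-- a partition of `S^d` into finitely many nonempty cells of geodesic diameter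
`< α`, colored with `k` colors so that distinct same-colored cells are at geodesic distance
`≥ δ > α`, yields `χ(D_{X,ε}(α)) ≤ k` for all small `ε ≥ 0` and all `X ⊆ S^d`. -/
theorem stmt_6 (d : ℕ) (hd : 1 ≤ d) (α : ℝ) (hα : 0 < α) (k m : ℕ)
    (A : Fin m → Set (EuclideanSpace ℝ (Fin (d + 1))))
    (hne : ∀ j, (A j).Nonempty)
    (hcover : (⋃ j, A j) = unitSphere d)
    (hdisj : ∀ j j', j ≠ j' → Disjoint (A j) (A j'))
    (hdiam : ∀ j, ∃ β, β < α ∧ ∀ x ∈ A j, ∀ y ∈ A j, gd x y ≤ β)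
    (c : Fin m → Fin k) (δ : ℝ) (hδ : α < δ)
    (hfar : ∀ j j', j ≠ j' → c j = c j' → ∀ x ∈ A j, ∀ y ∈ A j', δ ≤ gd x y) :
    ∃ ε₀ > (0 : ℝ), ∀ ε : ℝ, 0 ≤ ε → ε ≤ ε₀ →
      ∀ X : Set (EuclideanSpace ℝ (Fin (d + 1))), X ⊆ unitSphere d →
        (distGraph X α ε).chromaticNumber ≤ k :=
  stmt_6_general d α k m A hcover hdiam c δ hδ hfar
end

section
/- For every α with 2π/3 < α ≤ π there exists ε₀ > 0 such that for all 0 < ε ≤ ε₀, the chromatic number of the ε-distance graph D_ε(α) on the whole sphere S² is at most 5. -/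
open scoped RealInnerProductSpace

/-!
Cut the sphere into five pieces: the polar cap `x₂ ≥ 1/2` and the four quadrants (by the signs
of `x₀` and `x₁`) of the rest. Any two points of one piece have inner product at least `-1/2`,
i.e. geodesic distance at most `2π/3`: in the cap by Cauchy–Schwarz in the first two
coordinates, in a quadrant because `x₀y₀, x₁y₁ ≥ 0` and `x₂, y₂ ∈ [-1, 1/2]`. So once
`α - ε > 2π/3`, colouring each point by its piece is a proper colouring of `D_ε(α)`.
-/

lemma Real.arccos_neg_one_half : Real.arccos (-(1 / 2)) = 2 * Real.pi / 3 := by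
  have h : Real.arccos (1 / 2) = Real.pi / 3 := by
    rw [← Real.cos_pi_div_three, Real.arccos_cos (by positivity) (by linarith [Real.pi_pos])]
  rw [Real.arccos_neg, h]
  ring

lemma gd_le_two_pi_div_three {n : ℕ} {x y : EuclideanSpace ℝ (Fin n)}
    (h : -(1 / 2) ≤ ⟪x, y⟫) : gd x y ≤ 2 * Real.pi / 3 :=
  Real.arccos_neg_one_half ▸ Real.arccos_le_arccos h

lemma distGraph_colorable_of_gd_lt {n : ℕ} {X : Set (EuclideanSpace ℝ (Fin n))} {α ε : ℝ}
    {β : Type*} [Fintype β] (f : EuclideanSpace ℝ (Fin n) → β)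
    (hf : ∀ x ∈ X, ∀ y ∈ X, f x = f y → gd x y < α - ε) :
    (distGraph X α ε).Colorable (Fintype.card β) :=
  (SimpleGraph.Coloring.mk (G := distGraph X α ε) (fun v ↦ f v) fun {u v} huv hf_eq ↦
    (hf u u.2 v v.2 hf_eq).not_ge huv.2.1).colorable

lemma EuclideanSpace.inner_eq_sum_three (x y : EuclideanSpace ℝ (Fin 3)) :
    ⟪x, y⟫ = x 0 * y 0 + x 1 * y 1 + x 2 * y 2 := by
  simp [PiLp.inner_apply, Fin.sum_univ_three, mul_comm]

lemma sum_sq_eq_one_of_mem_unitSphere {x : EuclideanSpace ℝ (Fin 3)} (hx : x ∈ unitSphere 2) :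
    x 0 ^ 2 + x 1 ^ 2 + x 2 ^ 2 = 1 := by
  have h : ⟪x, x⟫ = 1 := by
    rw [real_inner_self_eq_norm_sq, mem_sphere_zero_iff_norm.mp hx, one_pow]
  rw [EuclideanSpace.inner_eq_sum_three] at h
  linear_combination h

lemma neg_half_le_inner_of_cap {x₀ x₁ x₂ y₀ y₁ y₂ : ℝ}
    (hx : x₀ ^ 2 + x₁ ^ 2 + x₂ ^ 2 = 1) (hy : y₀ ^ 2 + y₁ ^ 2 + y₂ ^ 2 = 1)
    (hx₂ : 1 / 2 ≤ x₂) (hy₂ : 1 / 2 ≤ y₂) :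
    -(1 / 2) ≤ x₀ * y₀ + x₁ * y₁ + x₂ * y₂ := by
  have cauchy_schwarz : (x₀ * y₀ + x₁ * y₁) ^ 2 ≤ (1 - x₂ ^ 2) * (1 - y₂ ^ 2) := by
    nlinarith [sq_nonneg (x₀ * y₁ - x₁ * y₀)]
  have cap_bound : (1 - x₂ ^ 2) * (1 - y₂ ^ 2) ≤ (x₂ * y₂ + 1 / 2) ^ 2 := by
    nlinarith [mul_nonneg (sub_nonneg.2 hx₂) (sub_nonneg.2 hy₂)]
  have lower := (abs_le_of_sq_le_sq' (cauchy_schwarz.trans cap_bound) (by nlinarith)).1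
  linarith

lemma neg_half_le_inner_of_sector {x₀ x₁ x₂ y₀ y₁ y₂ : ℝ}
    (hx : x₀ ^ 2 + x₁ ^ 2 + x₂ ^ 2 = 1) (hy : y₀ ^ 2 + y₁ ^ 2 + y₂ ^ 2 = 1)
    (h₀ : 0 ≤ x₀ * y₀) (h₁ : 0 ≤ x₁ * y₁) (hx₂ : x₂ ≤ 1 / 2) (hy₂ : y₂ ≤ 1 / 2) :
    -(1 / 2) ≤ x₀ * y₀ + x₁ * y₁ + x₂ * y₂ := by
  have hx₂' : -1 ≤ x₂ := by nlinarith
  have hy₂' : -1 ≤ y₂ := by nlinarith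
  nlinarith [mul_nonneg (sub_nonneg.2 hx₂) (sub_nonneg.2 hy₂),
    mul_nonneg (neg_le_iff_add_nonneg.1 hx₂') (neg_le_iff_add_nonneg.1 hy₂')]

lemma mul_nonneg_of_nonneg_iff {a b : ℝ} (h : 0 ≤ a ↔ 0 ≤ b) : 0 ≤ a * b := by
  by_cases ha : 0 ≤ a
  · exact mul_nonneg ha (h.1 ha)
  · exact mul_nonneg_of_nonpos_of_nonpos (le_of_not_ge ha) (le_of_not_ge (mt h.2 ha))

noncomputable def capSectorColor (x : EuclideanSpace ℝ (Fin 3)) : Option (Bool × Bool) :=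
  if 1 / 2 ≤ x 2 then none else some (decide (0 ≤ x 0), decide (0 ≤ x 1))

lemma neg_half_le_inner_of_capSectorColor_eq {x y : EuclideanSpace ℝ (Fin 3)}
    (hx : x ∈ unitSphere 2) (hy : y ∈ unitSphere 2) (h : capSectorColor x = capSectorColor y) :
    -(1 / 2) ≤ ⟪x, y⟫ := by
  have hx' := sum_sq_eq_one_of_mem_unitSphere hx
  have hy' := sum_sq_eq_one_of_mem_unitSphere hy
  rw [EuclideanSpace.inner_eq_sum_three]
  unfold capSectorColor at h
  split_ifs at h with hx₂ hy₂ hy₂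
  · exact neg_half_le_inner_of_cap hx' hy' hx₂ hy₂
  · simp only [Option.some.injEq, Prod.mk.injEq, decide_eq_decide] at h
    exact neg_half_le_inner_of_sector hx' hy' (mul_nonneg_of_nonneg_iff h.1)
      (mul_nonneg_of_nonneg_iff h.2) (le_of_not_ge hx₂) (le_of_not_ge hy₂)

lemma distGraph_unitSphere_two_colorable_five {α ε : ℝ} (h : 2 * Real.pi / 3 < α - ε) :
    (distGraph (unitSphere 2) α ε).Colorable 5 := by
  refine distGraph_colorable_of_gd_lt capSectorColor fun x hx y hy hxy ↦ ?_
  exact (gd_le_two_pi_div_three (neg_half_le_inner_of_capSectorColor_eq hx hy hxy)).trans_lt h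

theorem stmt_16_general (α : ℝ) (hαl : 2 * Real.pi / 3 < α) :
    ∃ ε₀ > (0 : ℝ), ∀ ε : ℝ, 0 < ε → ε ≤ ε₀ →
      (distGraph (unitSphere 2) α ε).chromaticNumber ≤ 5 := by
  refine ⟨(α - 2 * Real.pi / 3) / 2, by linarith, fun ε _ hε ↦ ?_⟩
  exact (distGraph_unitSphere_two_colorable_five (by linarith)).chromaticNumber_le

/-- for `2π/3 < α ≤ π` the ε-distance graph on the whole sphere `S²` is
`5`-colorable for all small `ε > 0`. -/
theorem stmt_16 (α : ℝ) (hαl : 2 * Real.pi / 3 < α) (hαπ : α ≤ Real.pi) :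
    ∃ ε₀ > (0 : ℝ), ∀ ε : ℝ, 0 < ε → ε ≤ ε₀ →
      (distGraph (unitSphere 2) α ε).chromaticNumber ≤ 5 :=
  stmt_16_general α hαl
end
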